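/- Reflection equivariance of the nonlocal hyperbolic system: if (u⁺,u⁻) is a bounded C¹ solution of the system ∂_t u⁺ + γ∂_x u⁺ = −λ⁺(u⁺,u⁻)u⁺ + λ⁻(u⁺,u⁻)u⁻, ∂_t u⁻ − γ∂_x u⁻ = λ⁺(u⁺,u⁻)u⁺ − λ⁻(u⁺,u⁻)u⁻ on ℝ×(0,∞), then the reflected pair ũ⁺(x,t):=u⁻(−x,t), ũ⁻(x,t):=u⁺(−x,t) is also a bounded C¹ solution of the same system. In particular, the system preserves the even/odd reflection symmetry of localised solutions. -/

import Mathlib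

open MeasureTheory Real

/-- Gaussian interaction kernel `K_j(s) = (2π m_j²)^{−1/2} exp(−(s−s_j)²/(2 m_j²))`
with `m_j = s_j/8`. -/
noncomputable def kern (sj s : ℝ) : ℝ :=
  (Real.sqrt (2 * Real.pi * (sj / 8) ^ 2))⁻¹ * Real.exp (-(s - sj) ^ 2 / (2 * (sj / 8) ^ 2))

/-- Perceived signal `y⁺[u⁺,u⁻](x)`. -/
noncomputable def yplus (qr qa qal sr sa sal : ℝ) (up um : ℝ → ℝ) (x : ℝ) : ℝ :=
    qr * ∫ s in Set.Ioi (0:ℝ),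
      kern sr s * ((up (x + s) + um (x + s)) - (up (x - s) + um (x - s)))
  - qa * ∫ s in Set.Ioi (0:ℝ),
      kern sa s * ((up (x + s) + um (x + s)) - (up (x - s) + um (x - s)))
  + qal * ∫ s in Set.Ioi (0:ℝ), kern sal s * (um (x + s) - up (x - s))

/-- Perceived signal `y⁻[u⁺,u⁻](x)`. -/
noncomputable def yminus (qr qa qal sr sa sal : ℝ) (up um : ℝ → ℝ) (x : ℝ) : ℝ :=
    qr * ∫ s in Set.Ioi (0:ℝ),
      kern sr s * ((up (x - s) + um (x - s)) - (up (x + s) + um (x + s)))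
  - qa * ∫ s in Set.Ioi (0:ℝ),
      kern sa s * ((up (x - s) + um (x - s)) - (up (x + s) + um (x + s)))
  + qal * ∫ s in Set.Ioi (0:ℝ), kern sal s * (up (x - s) - um (x + s))

/-- Turning rate `λ⁺ = λ₁ + λ₂ h(y⁺)` with `h(y) = 0.5 + 0.5 tanh(y − y₀)`. -/
noncomputable def lamP (l1 l2 y0 qr qa qal sr sa sal : ℝ) (up um : ℝ → ℝ) (x : ℝ) : ℝ :=
  l1 + l2 * (0.5 + 0.5 * Real.tanh (yplus qr qa qal sr sa sal up um x - y0))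

/-- Turning rate `λ⁻ = λ₁ + λ₂ h(y⁻)` with `h(y) = 0.5 + 0.5 tanh(y − y₀)`. -/
noncomputable def lamM (l1 l2 y0 qr qa qal sr sa sal : ℝ) (up um : ℝ → ℝ) (x : ℝ) : ℝ :=
  l1 + l2 * (0.5 + 0.5 * Real.tanh (yminus qr qa qal sr sa sal up um x - y0))

/-- `(u⁺,u⁻)` solves the nonlocal hyperbolic system
`∂_t u⁺ + γ∂_x u⁺ = −λ⁺u⁺ + λ⁻u⁻`, `∂_t u⁻ − γ∂_x u⁻ = λ⁺u⁺ − λ⁻u⁻` on `ℝ × (0,∞)`. -/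
def IsSolution (γ l1 l2 y0 qr qa qal sr sa sal : ℝ) (up um : ℝ → ℝ → ℝ) : Prop :=
  ∀ x t : ℝ, 0 < t →
    (deriv (fun τ => up x τ) t + γ * deriv (fun ξ => up ξ t) x
      = - lamP l1 l2 y0 qr qa qal sr sa sal (fun ξ => up ξ t) (fun ξ => um ξ t) x * up x t
        + lamM l1 l2 y0 qr qa qal sr sa sal (fun ξ => up ξ t) (fun ξ => um ξ t) x * um x t)
    ∧ (deriv (fun τ => um x τ) t - γ * deriv (fun ξ => um ξ t) x
      = lamP l1 l2 y0 qr qa qal sr sa sal (fun ξ => up ξ t) (fun ξ => um ξ t) x * up x t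
        - lamM l1 l2 y0 qr qa qal sr sa sal (fun ξ => up ξ t) (fun ξ => um ξ t) x * um x t)

/-! The reflection `x ↦ -x` reverses the direction of motion, so it must exchange `u⁺` and `u⁻`.
Substituting into the kernel integrals, the signal `y⁺` of the reflected pair at `x` is the signal
`y⁻` of the original pair at `-x` (and vice versa), so the turning rates `λ⁺` and `λ⁻` swap; the
sign change `∂_x ↦ -∂_x` then turns the `u⁻`-equation at `-x` into the `ũ⁺`-equation at `x`. -/

lemma yplus_reflect (qr qa qal sr sa sal : ℝ) (up um : ℝ → ℝ) (x : ℝ) :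
    yplus qr qa qal sr sa sal (fun ξ => um (-ξ)) (fun ξ => up (-ξ)) x
      = yminus qr qa qal sr sa sal up um (-x) := by
  simp only [yplus, yminus, neg_add', neg_sub', sub_neg_eq_add, add_comm (um _)]

lemma yminus_reflect (qr qa qal sr sa sal : ℝ) (up um : ℝ → ℝ) (x : ℝ) :
    yminus qr qa qal sr sa sal (fun ξ => um (-ξ)) (fun ξ => up (-ξ)) x
      = yplus qr qa qal sr sa sal up um (-x) := by
  simp only [yplus, yminus, neg_add', neg_sub', sub_neg_eq_add, add_comm (um _)]

lemma lamP_reflect (l1 l2 y0 qr qa qal sr sa sal : ℝ) (up um : ℝ → ℝ) (x : ℝ) :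
    lamP l1 l2 y0 qr qa qal sr sa sal (fun ξ => um (-ξ)) (fun ξ => up (-ξ)) x
      = lamM l1 l2 y0 qr qa qal sr sa sal up um (-x) := by
  rw [lamP, lamM, yplus_reflect]

lemma lamM_reflect (l1 l2 y0 qr qa qal sr sa sal : ℝ) (up um : ℝ → ℝ) (x : ℝ) :
    lamM l1 l2 y0 qr qa qal sr sa sal (fun ξ => um (-ξ)) (fun ξ => up (-ξ)) x
      = lamP l1 l2 y0 qr qa qal sr sa sal up um (-x) := by
  rw [lamP, lamM, yminus_reflect]

theorem IsSolution.reflect {γ l1 l2 y0 qr qa qal sr sa sal : ℝ} {up um : ℝ → ℝ → ℝ}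
    (hsol : IsSolution γ l1 l2 y0 qr qa qal sr sa sal up um) :
    IsSolution γ l1 l2 y0 qr qa qal sr sa sal
      (fun x t => um (-x) t) (fun x t => up (-x) t) := by
  intro x t ht
  obtain ⟨hup, hum⟩ := hsol (-x) t ht
  have hderiv_um := deriv_comp_neg (f := fun ξ => um ξ t) x
  have hderiv_up := deriv_comp_neg (f := fun ξ => up ξ t) x
  have hlamP := lamP_reflect l1 l2 y0 qr qa qal sr sa sal (fun ξ => up ξ t) (fun ξ => um ξ t) x
  have hlamM := lamM_reflect l1 l2 y0 qr qa qal sr sa sal (fun ξ => up ξ t) (fun ξ => um ξ t) x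
  rw [hderiv_um, hderiv_up, hlamP, hlamM]
  constructor <;> linarith

theorem contDiff_comp_neg_fst {n : WithTop ℕ∞} {f : ℝ → ℝ → ℝ}
    (hf : ContDiff ℝ n fun p : ℝ × ℝ => f p.1 p.2) :
    ContDiff ℝ n fun p : ℝ × ℝ => f (-p.1) p.2 :=
  hf.comp (contDiff_fst.neg.prodMk contDiff_snd)

theorem system_reflection_equivariance_general (γ l1 l2 y0 qr qa qal sr sa sal : ℝ)
    (up um : ℝ → ℝ → ℝ)
    (hupC1 : ContDiff ℝ 1 (fun p : ℝ × ℝ => up p.1 p.2))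
    (humC1 : ContDiff ℝ 1 (fun p : ℝ × ℝ => um p.1 p.2))
    (hupb : ∃ M, ∀ x t, |up x t| ≤ M) (humb : ∃ M, ∀ x t, |um x t| ≤ M)
    (hsol : IsSolution γ l1 l2 y0 qr qa qal sr sa sal up um) :
    IsSolution γ l1 l2 y0 qr qa qal sr sa sal
        (fun x t => um (-x) t) (fun x t => up (-x) t)
      ∧ ContDiff ℝ 1 (fun p : ℝ × ℝ => um (-p.1) p.2)
      ∧ ContDiff ℝ 1 (fun p : ℝ × ℝ => up (-p.1) p.2)
      ∧ (∃ M, ∀ x t, |um (-x) t| ≤ M) ∧ (∃ M, ∀ x t, |up (-x) t| ≤ M) := by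
  obtain ⟨Mu, hMu⟩ := hupb
  obtain ⟨Mm, hMm⟩ := humb
  exact ⟨hsol.reflect, contDiff_comp_neg_fst humC1, contDiff_comp_neg_fst hupC1,
    ⟨Mm, fun x t => hMm (-x) t⟩, ⟨Mu, fun x t => hMu (-x) t⟩⟩

/-- Reflection equivariance of the nonlocal hyperbolic system: if `(u⁺,u⁻)` is a
bounded `C¹` solution, then the reflected pair `ũ⁺(x,t) := u⁻(−x,t)`,
`ũ⁻(x,t) := u⁺(−x,t)` is also a bounded `C¹` solution of the same system. -/
theorem system_reflection_equivariance (γ l1 l2 y0 qr qa qal sr sa sal : ℝ)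
    (hγ : 0 < γ) (hsr : 0 < sr) (hsa : 0 < sa) (hsal : 0 < sal)
    (up um : ℝ → ℝ → ℝ)
    (hupC1 : ContDiff ℝ 1 (fun p : ℝ × ℝ => up p.1 p.2))
    (humC1 : ContDiff ℝ 1 (fun p : ℝ × ℝ => um p.1 p.2))
    (hupb : ∃ M, ∀ x t, |up x t| ≤ M) (humb : ∃ M, ∀ x t, |um x t| ≤ M)
    (hsol : IsSolution γ l1 l2 y0 qr qa qal sr sa sal up um) :
    IsSolution γ l1 l2 y0 qr qa qal sr sa sal
        (fun x t => um (-x) t) (fun x t => up (-x) t)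
      ∧ ContDiff ℝ 1 (fun p : ℝ × ℝ => um (-p.1) p.2)
      ∧ ContDiff ℝ 1 (fun p : ℝ × ℝ => up (-p.1) p.2)
      ∧ (∃ M, ∀ x t, |um (-x) t| ≤ M) ∧ (∃ M, ∀ x t, |up (-x) t| ≤ M) :=
  system_reflection_equivariance_general γ l1 l2 y0 qr qa qal sr sa sal up um hupC1 humC1 hupb humb
    hsol
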